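/- Under the sequential join, if i = {{0|0|0}|0|{0|0|0}} then for every scoring game G, (i ▷ G)_F^{SL} = G_F^{SL} and (i ▷ G)_F^{SR} = G_F^{SR}, and likewise (G ▷ i)_F^{SL} = G_F^{SL} and (G ▷ i)_F^{SR} = G_F^{SR}. -/

import Mathlib

inductive SGame : Type where
  | mk (score : ℝ) (L R : List SGame)

namespace SGame

def score : SGame → ℝ | .mk s _ _ => s
def L : SGame → List SGame | .mk _ l _ => l
def R : SGame → List SGame | .mk _ _ r => r

mutual
  noncomputable def leftScore : SGame → ℝ
    | .mk s l _ => WithBot.unbotD s ((l.attach.map fun x => rightScore x.1).maximum)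
  termination_by g => sizeOf g
  decreasing_by
    have := List.sizeOf_lt_of_mem x.2
    simp only [SGame.mk.sizeOf_spec]
    omega
  noncomputable def rightScore : SGame → ℝ
    | .mk s _ r => WithTop.untopD s ((r.attach.map fun x => leftScore x.1).minimum)
  termination_by g => sizeOf g
  decreasing_by
    have := List.sizeOf_lt_of_mem x.2
    simp only [SGame.mk.sizeOf_spec]
    omega
end

/-- Conjunctive sum: move in all components simultaneously. -/
def conj : SGame → SGame → SGame
  | .mk s l r, .mk t l' r' =>
    .mk (s + t)
      (l.attach.flatMap fun x => l'.attach.map fun y => conj x.1 y.1)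
      (r.attach.flatMap fun x => r'.attach.map fun y => conj x.1 y.1)
termination_by G H => sizeOf G + sizeOf H
decreasing_by
  all_goals
    have h1 := List.sizeOf_lt_of_mem x.2
    have h2 := List.sizeOf_lt_of_mem y.2
    simp only [SGame.mk.sizeOf_spec]
    omega

/-- Selective sum: move in any nonempty subset of the components. -/
def sel : SGame → SGame → SGame
  | .mk s l r, .mk t l' r' =>
    .mk (s + t)
      ((l.attach.map fun x => sel x.1 (.mk t l' r')) ++
       (l'.attach.map fun y => sel (.mk s l r) y.1) ++
       (l.attach.flatMap fun x => l'.attach.map fun y => sel x.1 y.1))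
      ((r.attach.map fun x => sel x.1 (.mk t l' r')) ++
       (r'.attach.map fun y => sel (.mk s l r) y.1) ++
       (r.attach.flatMap fun x => r'.attach.map fun y => sel x.1 y.1))
termination_by G H => sizeOf G + sizeOf H
decreasing_by
  all_goals first
  | (have h1 := List.sizeOf_lt_of_mem x.2
     have h2 := List.sizeOf_lt_of_mem y.2
     simp only [SGame.mk.sizeOf_spec]; omega)
  | (have h1 := List.sizeOf_lt_of_mem x.2
     simp only [SGame.mk.sizeOf_spec]; omega)
  | (have h2 := List.sizeOf_lt_of_mem y.2
     simp only [SGame.mk.sizeOf_spec]; omega)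

/-- Add `a` points (for Left) to every score of the game. -/
def addScore (a : ℝ) : SGame → SGame
  | .mk s l r => .mk (a + s) (l.attach.map fun x => addScore a x.1)
      (r.attach.map fun x => addScore a x.1)
termination_by g => sizeOf g
decreasing_by
  all_goals
    have := List.sizeOf_lt_of_mem x.2
    simp only [SGame.mk.sizeOf_spec]; omega

/-- The negative of a game: swap the roles of Left and Right and negate all scores. -/
def neg : SGame → SGame
  | .mk s l r => .mk (-s) (r.attach.map fun x => neg x.1) (l.attach.map fun x => neg x.1)
termination_by g => sizeOf g
decreasing_by
  all_goals
    have := List.sizeOf_lt_of_mem x.2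
    simp only [SGame.mk.sizeOf_spec]; omega

/-- Impartial scoring game. -/
def Impartial : SGame → Prop
  | .mk s l r =>
    (l = [] ↔ r = []) ∧
    (∀ x ∈ l, ∃ y ∈ r, addScore (-s) x = neg (addScore (-s) y)) ∧
    (∀ x ∈ l.attach, Impartial x.1) ∧ (∀ y ∈ r.attach, Impartial y.1)
termination_by g => sizeOf g
decreasing_by
  all_goals
    first
    | (have := List.sizeOf_lt_of_mem x.2
       simp only [SGame.mk.sizeOf_spec]; omega)
    | (have := List.sizeOf_lt_of_mem y.2
       simp only [SGame.mk.sizeOf_spec]; omega)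

/-- Sequential join: play all of `G` first, then continue in `H`
    with the accumulated score. -/
def seq : SGame → SGame → SGame
  | .mk s [] [], H => addScore s H
  | .mk s l r, H =>
    .mk (s + H.score) (l.attach.map fun x => seq x.1 H)
      (r.attach.map fun x => seq x.1 H)
termination_by G _ => sizeOf G
decreasing_by
  all_goals
    have := List.sizeOf_lt_of_mem x.2
    simp only [SGame.mk.sizeOf_spec]; omega

/-- Outcome classes for scoring games. -/
inductive Outcome : Type where
  | L | R | N | P | Tie
deriving DecidableEq

open Classical in
/-- The outcome class of a scoring game, determined by the signs of the
    optimal final scores with Left, resp. Right, moving first. -/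
noncomputable def outcome (G : SGame) : Outcome :=
  if 0 < leftScore G ∧ rightScore G < 0 then .N
  else if leftScore G < 0 ∧ 0 < rightScore G then .P
  else if leftScore G = 0 ∧ rightScore G = 0 then .Tie
  else if 0 ≤ leftScore G ∧ 0 ≤ rightScore G then .L
  else .R

end SGame

/-!
Playing `i` costs exactly two moves and changes no score, so it neither shifts the score nor
changes who moves next. When `G ▷ i` is played, each terminal position `s` of `G` is replaced
by `s + i`, which has optimal value `s` whoever starts; when `i ▷ G` is played, both players
pass once through `i` and then face `G` itself, with the original player to move.
-/

namespace SGame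

@[simp]
lemma leftScore_mk (s : ℝ) (l r : List SGame) :
    leftScore (.mk s l r) = WithBot.unbotD s ((l.map rightScore).maximum) := by
  rw [leftScore]; congr 1; simp

@[simp]
lemma rightScore_mk (s : ℝ) (l r : List SGame) :
    rightScore (.mk s l r) = WithTop.untopD s ((r.map leftScore).minimum) := by
  rw [rightScore]; congr 1; simp

lemma sizeOf_lt_of_mem_left {s : ℝ} {l r : List SGame} {x : SGame} (hx : x ∈ l) :
    sizeOf x < sizeOf (SGame.mk s l r) := by
  have := List.sizeOf_lt_of_mem hx
  simp only [SGame.mk.sizeOf_spec]; omega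

lemma sizeOf_lt_of_mem_right {s : ℝ} {l r : List SGame} {x : SGame} (hx : x ∈ r) :
    sizeOf x < sizeOf (SGame.mk s l r) := by
  have := List.sizeOf_lt_of_mem hx
  simp only [SGame.mk.sizeOf_spec]; omega

@[simp]
lemma addScore_mk (a s : ℝ) (l r : List SGame) :
    addScore a (.mk s l r) = .mk (a + s) (l.map (addScore a)) (r.map (addScore a)) := by
  rw [addScore]; simp

theorem addScore_zero : ∀ G : SGame, addScore 0 G = G
  | .mk s l r => by
    rw [addScore_mk, zero_add]
    congr 1
    · exact (List.map_congr_left fun x hx => addScore_zero x).trans l.map_id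
    · exact (List.map_congr_left fun x hx => addScore_zero x).trans r.map_id
termination_by G => sizeOf G
decreasing_by
  · exact sizeOf_lt_of_mem_left hx
  · exact sizeOf_lt_of_mem_right hx

lemma seq_mk_nil (s : ℝ) (H : SGame) : seq (.mk s [] []) H = addScore s H := by
  rw [seq]

lemma seq_mk_of_ne_nil {s : ℝ} {l r : List SGame} (h : ¬(l = [] ∧ r = [])) (H : SGame) :
    seq (.mk s l r) H = .mk (s + H.score) (l.map (seq · H)) (r.map (seq · H)) := by
  rw [seq.eq_2 _ _ _ _ fun hl hr => h ⟨hl, hr⟩]; simp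

def IsNeutralEnding (H : SGame) : Prop :=
  H.score = 0 ∧ ∀ a, leftScore (addScore a H) = a ∧ rightScore (addScore a H) = a

theorem scores_seq_of_isNeutralEnding {H : SGame} (hH : IsNeutralEnding H) :
    ∀ G : SGame, leftScore (seq G H) = leftScore G ∧ rightScore (seq G H) = rightScore G
  | .mk s l r => by
    by_cases hnil : l = [] ∧ r = []
    · obtain ⟨rfl, rfl⟩ := hnil
      simpa [seq_mk_nil] using hH.2 s
    · have hl : (l.map (seq · H)).map rightScore = l.map rightScore := by
        rw [List.map_map]
        exact List.map_congr_left fun x hx => (scores_seq_of_isNeutralEnding hH x).2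
      have hr : (r.map (seq · H)).map leftScore = r.map leftScore := by
        rw [List.map_map]
        exact List.map_congr_left fun x hx => (scores_seq_of_isNeutralEnding hH x).1
      rw [seq_mk_of_ne_nil hnil, hH.1, add_zero]
      simp only [leftScore_mk, rightScore_mk, hl, hr, and_self]
termination_by G => sizeOf G
decreasing_by
  · exact sizeOf_lt_of_mem_left hx
  · exact sizeOf_lt_of_mem_right hx

def iGame : SGame :=
  .mk 0 [.mk 0 [.mk 0 [] []] [.mk 0 [] []]] [.mk 0 [.mk 0 [] []] [.mk 0 [] []]]

theorem isNeutralEnding_iGame : IsNeutralEnding iGame :=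
  ⟨rfl, fun a => by simp [iGame]⟩

lemma iGame_seq (G : SGame) :
    seq iGame G = .mk G.score [.mk G.score [G] [G]] [.mk G.score [G] [G]] := by
  have hzero : seq (.mk 0 [] []) G = G := by rw [seq_mk_nil, addScore_zero]
  rw [iGame, seq_mk_of_ne_nil (by simp)]
  simp [seq_mk_of_ne_nil, hzero]

theorem scores_iGame_seq (G : SGame) :
    leftScore (seq iGame G) = leftScore G ∧ rightScore (seq iGame G) = rightScore G := by
  simp [iGame_seq]

end SGame

open SGame in
/-- The game `i = {{0|0|0}|0|{0|0|0}}` is an identity for the sequential join at the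
level of final scores: joining `i` on either side leaves both optimal final scores
unchanged. -/
theorem seq_identity_final_scores (G : SGame) :
    let i : SGame := .mk 0 [.mk 0 [.mk 0 [] []] [.mk 0 [] []]]
                          [.mk 0 [.mk 0 [] []] [.mk 0 [] []]]
    leftScore (seq i G) = leftScore G ∧ rightScore (seq i G) = rightScore G ∧
      leftScore (seq G i) = leftScore G ∧ rightScore (seq G i) = rightScore G :=
  ⟨(scores_iGame_seq G).1, (scores_iGame_seq G).2,
    (scores_seq_of_isNeutralEnding isNeutralEnding_iGame G).1,
    (scores_seq_of_isNeutralEnding isNeutralEnding_iGame G).2⟩
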